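/- For a constructor term over a simple sorted signature, size is polynomially bounded in depth: there exists a constant d depending only on the signature such that for every well-typed constructor term t of a sort of rank r, |t| ≤ d^r · depth(t)^{r+1}. -/

import Mathlib

inductive Term (F V : Type) : Type
  | var : V → Term F V
  | fn : F → List (Term F V) → Term F V

namespace Term
variable {F V : Type}

mutual
  def size : Term F V → ℕ
    | .var _ => 1
    | .fn _ ts => 1 + sizeList ts
  def sizeList : List (Term F V) → ℕ
    | [] => 0
    | t :: ts => size t + sizeList ts
end

mutual
  def depth : Term F V → ℕ
    | .var _ => 0
    | .fn _ ts => 1 + depthList ts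
  def depthList : List (Term F V) → ℕ
    | [] => 0
    | t :: ts => max (depth t) (depthList ts)
end

mutual
  def width : Term F V → ℕ
    | .var _ => 1
    | .fn _ [] => 1
    | .fn _ (t :: ts) => max (ts.length + 1) (max (width t) (widthList ts))
  def widthList : List (Term F V) → ℕ
    | [] => 1
    | t :: ts => max (width t) (widthList ts)
end

mutual
  def bnorm : Term F V → ℕ
    | .var _ => 1
    | .fn _ ts => 1 + max ts.length (bnormList ts)
  def bnormList : List (Term F V) → ℕ
    | [] => 0
    | t :: ts => max (bnorm t) (bnormList ts)
end

mutual
  def subst (σ : V → Term F V) : Term F V → Term F V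
    | .var x => σ x
    | .fn f ts => .fn f (substList σ ts)
  def substList (σ : V → Term F V) : List (Term F V) → List (Term F V)
    | [] => []
    | t :: ts => subst σ t :: substList σ ts
end

/-- The equivalence on terms induced by an equivalence `eqv` on function symbols:
`s ≈ t` iff `s = t`, or the roots are equivalent and the arguments are pairwise
equivalent up to a permutation. -/
inductive TermEq (eqv : F → F → Prop) : Term F V → Term F V → Prop
  | refl (t) : TermEq eqv t t
  | fn {f g : F} {ss ts : List (Term F V)} (hfg : eqv f g)
      (π : Fin ss.length → Fin ts.length) (hbij : Function.Bijective π)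
      (h : ∀ i, TermEq eqv (ss.get i) (ts.get (π i))) :
      TermEq eqv (.fn f ss) (.fn g ts)

/-- The (reflexive) subterm relation. -/
inductive Subterm : Term F V → Term F V → Prop
  | refl (t) : Subterm t t
  | arg {s t : Term F V} {f : F} {ts : List (Term F V)} :
      t ∈ ts → Subterm s t → Subterm s (.fn f ts)

end Term

namespace Term
variable {S F V : Type}

mutual
  /-- Depth, where the depth of a variable or constant is 1. -/
  def depth1 : Term F V → ℕ
    | .var _ => 1
    | .fn _ ts => 1 + depth1List ts
  def depth1List : List (Term F V) → ℕ
    | [] => 0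
    | t :: ts => max (depth1 t) (depth1List ts)
end

/-- Well-typed terms over an `S`-sorted signature with arities `ar`,
result types `typeOf` and sorted variables `vsort`. -/
inductive WellTyped (ar : F → List S) (typeOf : F → S) (vsort : V → S) :
    Term F V → S → Prop
  | var (x : V) : WellTyped ar typeOf vsort (.var x) (vsort x)
  | fn {f : F} {ts : List (Term F V)} (hlen : ts.length = (ar f).length)
      (h : ∀ i : Fin ts.length,
        WellTyped ar typeOf vsort (ts.get i) ((ar f).get (Fin.cast hlen i))) :
      WellTyped ar typeOf vsort (.fn f ts) (typeOf f)

/-- A sorted signature is simple (w.r.t. a rank function on sorts) if for every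
(constructor) symbol `c : (s₁,…,sₙ) → s` each `sᵢ` has rank at most that of `s`,
and at most one `sᵢ` has rank equal to that of `s`. -/
def SimpleSig (ar : F → List S) (typeOf : F → S) (rank : S → ℕ) : Prop :=
  ∀ f : F, (∀ s' ∈ ar f, rank s' ≤ rank (typeOf f)) ∧
    ((ar f).countP (fun s' => decide (rank s' = rank (typeOf f)))) ≤ 1

end Term

open Term

/-!
Let `d` exceed every arity and argue by induction on typing. If `t = c(t₁, …, tₙ)` has a sort of
rank `r` and its arguments have depth at most `M`, then at most one argument has a sort of rank
`r`, contributing at most `d^r M^(r+1)`, while the fewer than `d` others have rank at most `r - 1`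
(and do not exist when `r = 0`), contributing at most `d^(r-1) M^r` each. Hence
`|t| ≤ 1 + d^r M^(r+1) + d^r M^r ≤ d^r (M+1)^(r+1)`.
-/

theorem List.sum_map_le_countP_mul_add {α : Type*} (l : List α) (p : α → Bool) {g : α → ℕ}
    {a b : ℕ} (ha : ∀ x ∈ l, p x → g x ≤ a) (hb : ∀ x ∈ l, p x = false → g x ≤ b) :
    (l.map g).sum ≤ l.countP p * a + l.countP (fun x => !p x) * b := by
  induction l with
  | nil => simp
  | cons x l ih =>
    have ih := ih (fun y hy => ha y (.tail x hy)) (fun y hy => hb y (.tail x hy))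
    cases hx : p x
    · have := hb x (.head l) hx
      simp only [List.map_cons, List.sum_cons, List.countP_cons, hx, Bool.not_false,
        ↓reduceIte, add_mul, one_mul]
      omega
    · have := ha x (.head l) hx
      simp only [List.map_cons, List.sum_cons, List.countP_cons, hx, Bool.not_true,
        ↓reduceIte, add_mul, one_mul]
      omega

def sizeBound (d r D : ℕ) : ℕ := d ^ r * D ^ (r + 1)

theorem sizeBound_mono_rank {d r r' : ℕ} (D : ℕ) (hd : 1 ≤ d) (h : r ≤ r') :
    sizeBound d r D ≤ sizeBound d r' D := by
  rcases Nat.eq_zero_or_pos D with rfl | hD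
  · simp [sizeBound]
  · unfold sizeBound; gcongr

theorem sizeBound_mono_depth (d r : ℕ) {D D' : ℕ} (h : D ≤ D') :
    sizeBound d r D ≤ sizeBound d r D' := by
  unfold sizeBound; gcongr

theorem succ_add_le_sizeBound_succ {d r M a b : ℕ} (ha : a ≤ 1) (hb : b < d)
    (hr : r = 0 → b = 0) :
    1 + (a * sizeBound d r M + b * sizeBound d (r - 1) M) ≤ sizeBound d r (M + 1) := by
  rcases r with _ | k
  · obtain rfl := hr rfl
    simp only [sizeBound, pow_zero, zero_add, pow_one, one_mul, zero_mul, add_zero]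
    nlinarith
  rcases Nat.eq_zero_or_pos M with rfl | hM
  · simpa [sizeBound] using Nat.one_le_pow _ _ (by omega)
  simp only [sizeBound, Nat.add_sub_cancel]
  have hsmall : 1 ≤ d ^ k * M ^ (k + 1) :=
    Nat.mul_le_mul (Nat.one_le_pow _ _ (by omega)) (Nat.one_le_pow _ _ hM)
  have hpow : M ^ (k + 2) + M ^ (k + 1) ≤ (M + 1) ^ (k + 2) := by
    calc M ^ (k + 2) + M ^ (k + 1) = M ^ (k + 1) * (M + 1) := by ring
      _ ≤ (M + 1) ^ (k + 1) * (M + 1) := by gcongr; omega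
      _ = (M + 1) ^ (k + 2) := by ring
  have hbig : a * (d ^ (k + 1) * M ^ (k + 1 + 1)) ≤ d ^ (k + 1) * M ^ (k + 2) :=
    mul_le_of_le_one_left' ha
  have hrest : 1 + b * (d ^ k * M ^ (k + 1)) ≤ d * (d ^ k * M ^ (k + 1)) := by
    calc 1 + b * (d ^ k * M ^ (k + 1)) ≤ (b + 1) * (d ^ k * M ^ (k + 1)) := by nlinarith
      _ ≤ d * (d ^ k * M ^ (k + 1)) := by gcongr; omega
  calc 1 + (a * (d ^ (k + 1) * M ^ (k + 1 + 1)) + b * (d ^ k * M ^ (k + 1)))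
      ≤ d ^ (k + 1) * M ^ (k + 2) + d * (d ^ k * M ^ (k + 1)) := by omega
    _ = d ^ (k + 1) * (M ^ (k + 2) + M ^ (k + 1)) := by ring
    _ ≤ d ^ (k + 1) * (M + 1) ^ (k + 1 + 1) := by gcongr

namespace Term
variable {S F V : Type}

theorem depth1_le_depth1List {t : Term F V} {ts : List (Term F V)} (h : t ∈ ts) :
    depth1 t ≤ depth1List ts := by
  induction ts with
  | nil => cases h
  | cons u ts ih =>
    rw [depth1List]
    rcases List.mem_cons.1 h with rfl | h
    · exact le_max_left _ _
    · exact (ih h).trans (le_max_right _ _)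

theorem sizeList_le_sum_of_forall₂ {g : S → ℕ} {ts : List (Term F V)} {σ : List S}
    (h : List.Forall₂ (fun t s => size t ≤ g s) ts σ) : sizeList ts ≤ (σ.map g).sum := by
  induction h with
  | nil => simp [sizeList]
  | cons hts _ ih => simp only [sizeList, List.map_cons, List.sum_cons]; omega

theorem size_fn_le_sizeBound {ar : F → List S} {typeOf : F → S} {rank : S → ℕ}
    (hsimple : SimpleSig ar typeOf rank) {d : ℕ} {f : F} {ts : List (Term F V)}
    (hlen : ts.length = (ar f).length) (hd : (ar f).length < d)
    (hargs : ∀ i : Fin ts.length, size (ts.get i) ≤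
      sizeBound d (rank ((ar f).get (Fin.cast hlen i))) (depth1 (ts.get i))) :
    size (fn f ts) ≤ sizeBound d (rank (typeOf f)) (depth1 (fn f ts)) := by
  set r := rank (typeOf f)
  set M := depth1List ts
  obtain ⟨hle, hcount⟩ := hsimple f
  have hforall : List.Forall₂ (fun t s => size t ≤ sizeBound d (rank s) M) ts (ar f) :=
    List.forall₂_iff_get.2 ⟨hlen, fun i h₁ _ => (hargs ⟨i, h₁⟩).trans
      (sizeBound_mono_depth _ _ (depth1_le_depth1List (List.get_mem _ _)))⟩
  have hsum := (ar f).sum_map_le_countP_mul_add (fun s => decide (rank s = r))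
    (g := fun s => sizeBound d (rank s) M) (a := sizeBound d r M) (b := sizeBound d (r - 1) M)
    (fun s _ hs => by rw [of_decide_eq_true hs])
    (fun s hs hne => sizeBound_mono_rank _ (by omega)
      (by have := hle s hs; have := of_decide_eq_false hne; omega))
  have hlow : r = 0 → (ar f).countP (fun s => !decide (rank s = r)) = 0 := fun hr =>
    List.countP_eq_zero.2 fun s hs => by
      simp only [Bool.not_eq_eq_eq_not, Bool.not_true, decide_eq_false_iff_not, Decidable.not_not]
      have := hle s hs
      omega
  calc size (fn f ts) = 1 + sizeList ts := by rw [size]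
    _ ≤ 1 + ((ar f).countP (fun s => decide (rank s = r)) * sizeBound d r M +
          (ar f).countP (fun s => !decide (rank s = r)) * sizeBound d (r - 1) M) := by
      gcongr; exact (sizeList_le_sum_of_forall₂ hforall).trans hsum
    _ ≤ sizeBound d r (M + 1) :=
      succ_add_le_sizeBound_succ hcount (List.countP_le_length.trans_lt hd) hlow
    _ = sizeBound d r (depth1 (fn f ts)) := by rw [depth1, add_comm]

end Term

/-- For a constructor term over a simple sorted signature, size is polynomially
bounded in depth: there is a constant `d` depending only on the signature such
that every well-typed constructor term `t` of a sort of rank `r` satisfies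
`|t| ≤ d^r · depth(t)^(r+1)`. -/
theorem simple_signature_size_bound {S F V : Type} [Fintype F]
    (ar : F → List S) (typeOf : F → S) (vsort : V → S) (rank : S → ℕ)
    (hsimple : SimpleSig ar typeOf rank) :
    ∃ d : ℕ, ∀ (t : Term F V) (s : S), WellTyped ar typeOf vsort t s →
      size t ≤ d ^ rank s * depth1 t ^ (rank s + 1) := by
  refine ⟨Finset.univ.sup (fun f => (ar f).length) + 1, fun t s ht => ?_⟩
  induction ht with
  | var => simpa [size, depth1] using Nat.one_le_pow _ _ (Nat.succ_pos _)
  | fn hlen _ ih =>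
    exact size_fn_le_sizeBound hsimple hlen
      (Nat.lt_succ_of_le (Finset.le_sup (f := fun f => (ar f).length) (Finset.mem_univ _))) ih
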